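/- arXiv:2305.04335 — 4 statements merged into one kernel-verified Lean document; each statement's English description precedes it below -/
import Mathlib

section
/- Let Q be a probability measure on a metric space and suppose Q satisfies the Tsybakov noise condition Q(0 < |η(X) - 1/2| ≤ t) ≤ C_β t^β for all t > 0. If |η̃(x) - η(x)| ≤ C_α r^α for all x in a set S, then ∫_S |η(x) - 1/2| · 1{|η(x) - 1/2| ≤ 2|η̃(x) - η(x)|} dQ(x) ≤ 2C_α C_β (2C_α)^β r^{α(β+1)}. -/
open MeasureTheory

/-- **Bias contribution to the excess risk under Tsybakov noise.**
If `Q` satisfies the Tsybakov noise condition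
`Q(0 < |η(X) - 1/2| ≤ t) ≤ C_β t^β` for all `t > 0`, and `|η̃ - η| ≤ C_α r^α`
on a set `S`, then
`∫_S |η - 1/2| · 1{|η - 1/2| ≤ 2|η̃ - η|} dQ ≤ 2 C_α C_β (2C_α)^β r^{α(β+1)}`. -/
theorem bias_excess_risk_bound {X : Type*} [MeasurableSpace X]
    (Q : Measure X) [IsProbabilityMeasure Q]
    (η ηtil : X → ℝ) (hη : Measurable η) (hηtil : Measurable ηtil)
    (Cα Cβ α β r : ℝ) (hCα : 0 < Cα) (hCβ : 0 < Cβ) (hα : 0 < α) (hβ : 0 ≤ β)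
    (hr : 0 < r)
    (S : Set X) (hSmeas : MeasurableSet S)
    (hnoise : ∀ t : ℝ, 0 < t →
      (Q {x | 0 < |η x - 1/2| ∧ |η x - 1/2| ≤ t}).toReal ≤ Cβ * t ^ β)
    (hbias : ∀ x ∈ S, |ηtil x - η x| ≤ Cα * r ^ α) :
    ∫ x in S, |η x - 1/2| *
        (if |η x - 1/2| ≤ 2 * |ηtil x - η x| then (1 : ℝ) else 0) ∂Q
      ≤ 2 * Cα * Cβ * (2 * Cα) ^ β * r ^ (α * (β + 1)) := by
  set t : ℝ := 2 * Cα * r ^ α with ht_def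
  have hrα : (0:ℝ) < r ^ α := Real.rpow_pos_of_pos hr α
  have ht : 0 < t := by positivity
  set f : X → ℝ := fun x => |η x - 1/2| *
      (if |η x - 1/2| ≤ 2 * |ηtil x - η x| then (1 : ℝ) else 0) with hf_def
  set A : Set X := {x | 0 < |η x - 1/2| ∧ |η x - 1/2| ≤ t} with hA_def
  have hAmeas : MeasurableSet A := by
    apply MeasurableSet.inter
    · exact measurableSet_lt measurable_const ((hη.sub measurable_const).abs)
    · exact measurableSet_le ((hη.sub measurable_const).abs) measurable_const
  set g : X → ℝ := A.indicator (fun _ => t) with hg_def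
  -- pointwise bound on S
  have hfg : ∀ x ∈ S, f x ≤ g x := by
    intro x hx
    by_cases hcond : |η x - 1/2| ≤ 2 * |ηtil x - η x|
    · by_cases hz : |η x - 1/2| = 0
      · simp only [hf_def, hz, zero_mul]
        exact Set.indicator_nonneg (fun _ _ => ht.le) x
      · have h0 : 0 < |η x - 1/2| := lt_of_le_of_ne (abs_nonneg _) (Ne.symm hz)
        have hle : |η x - 1/2| ≤ t := by
          calc |η x - 1/2| ≤ 2 * |ηtil x - η x| := hcond
            _ ≤ 2 * (Cα * r ^ α) := by linarith [hbias x hx]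
            _ = t := by ring
        have hxA : x ∈ A := ⟨h0, hle⟩
        simp only [hf_def, hg_def, Set.indicator_of_mem hxA, if_pos hcond, mul_one]
        exact hle
    · simp only [hf_def, if_neg hcond, mul_zero]
      exact Set.indicator_nonneg (fun _ _ => ht.le) x
  have hfmeas : Measurable f := by
    apply Measurable.mul ((hη.sub measurable_const).abs)
    exact Measurable.ite
      (measurableSet_le ((hη.sub measurable_const).abs)
        (measurable_const.mul ((hηtil.sub hη).abs)))
      measurable_const measurable_const
  have hgint : Integrable g Q :=
    (integrable_const t).indicator hAmeas
  have hfint : IntegrableOn f S Q := by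
    apply Integrable.mono' (integrable_const t)
      (hfmeas.aestronglyMeasurable.restrict)
    rw [ae_restrict_iff' hSmeas]
    filter_upwards with x hx
    rw [Real.norm_eq_abs]
    have h1 : 0 ≤ f x := by
      simp only [hf_def]
      positivity
    rw [abs_of_nonneg h1]
    calc f x ≤ g x := hfg x hx
      _ ≤ t := Set.indicator_le_self' (fun _ _ => ht.le) x
  have step1 : ∫ x in S, f x ∂Q ≤ ∫ x in S, g x ∂Q :=
    setIntegral_mono_on hfint hgint.integrableOn hSmeas hfg
  have step2 : ∫ x in S, g x ∂Q ≤ ∫ x, g x ∂Q := by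
    apply setIntegral_le_integral hgint
    filter_upwards with x
    exact Set.indicator_nonneg (fun _ _ => ht.le) x
  have step3 : ∫ x, g x ∂Q = (Q A).toReal * t := by
    rw [hg_def, integral_indicator_const _ hAmeas]
    simp [smul_eq_mul, Measure.real]
  have step4 : (Q A).toReal * t ≤ Cβ * t ^ β * t := by
    apply mul_le_mul_of_nonneg_right (hnoise t ht) ht.le
  have key : Cβ * t ^ β * t = 2 * Cα * Cβ * (2 * Cα) ^ β * r ^ (α * (β + 1)) := by
    have h1 : t ^ β = (2 * Cα) ^ β * r ^ (α * β) := by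
      rw [ht_def, Real.mul_rpow (by positivity) (by positivity),
        ← Real.rpow_mul hr.le]
    have h2 : r ^ (α * (β + 1)) = r ^ (α * β) * r ^ α := by
      rw [← Real.rpow_add hr]; ring_nf
    rw [h1, h2, ht_def]; ring
  calc ∫ x in S, f x ∂Q ≤ ∫ x in S, g x ∂Q := step1
    _ ≤ ∫ x, g x ∂Q := step2
    _ = (Q A).toReal * t := step3
    _ ≤ Cβ * t ^ β * t := step4
    _ = _ := key
end

section
/- Let M, M̂ : X → [0,1] be measurable, let Q satisfy Q(|η - 1/2| ≤ t) ≤ C_β t^β where M(x) = |η(x) - 1/2|, and suppose E[M̂(X)²] ≤ V. Then for every t ∈ (0,1): E[M(X)·1{M(X) ≤ 2M̂(X)}] ≤ 2C_β t^{β+1} + 6V/t. In particular, choosing t = V^{1/(β+2)} gives E[M(X)·1{M(X) ≤ 2M̂(X)}] ≤ C·V^{(β+1)/(β+2)} for a constant C depending only on C_β. -/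
open MeasureTheory

/-- **Variance contribution to the excess risk under Tsybakov noise.**
Let `M, M̂` be measurable, `Q(M ≤ t) ≤ C_β t^β` (Tsybakov noise for
`M(x) = |η(x) - 1/2|`), and `E[M̂²] ≤ V`.  Then for every `t ∈ (0,1)`,
`E[M·1{M ≤ 2M̂}] ≤ 2C_β t^{β+1} + 6V/t`; in particular, choosing
`t = V^{1/(β+2)}` gives `E[M·1{M ≤ 2M̂}] ≤ C·V^{(β+1)/(β+2)}` for a constant
`C` depending only on `C_β`. -/
theorem variance_excess_risk_bound (Cβ β : ℝ) (hCβ : 0 < Cβ) (hβ : 0 ≤ β) :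
    ∃ C > (0 : ℝ), ∀ (Ω : Type) (_ : MeasurableSpace Ω) (μ : Measure Ω),
      IsProbabilityMeasure μ →
      ∀ (M Mhat : Ω → ℝ) (V : ℝ),
        Measurable M → Measurable Mhat →
        (∀ ω, M ω ∈ Set.Icc (0 : ℝ) 1) → (∀ ω, 0 ≤ Mhat ω) →
        (∀ t : ℝ, 0 < t → (μ {ω | M ω ≤ t}).toReal ≤ Cβ * t ^ β) →
        Integrable (fun ω => Mhat ω ^ 2) μ →
        (∫ ω, Mhat ω ^ 2 ∂μ) ≤ V →
        ((∀ t : ℝ, 0 < t → t < 1 →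
            ∫ ω, M ω * (if M ω ≤ 2 * Mhat ω then (1 : ℝ) else 0) ∂μ
              ≤ 2 * Cβ * t ^ (β + 1) + 6 * V / t)
          ∧
          ∫ ω, M ω * (if M ω ≤ 2 * Mhat ω then (1 : ℝ) else 0) ∂μ
            ≤ C * V ^ ((β + 1) / (β + 2))) := by
  refine ⟨2 * Cβ + 7, by linarith, ?_⟩
  intro Ω _ μ hμ M Mhat V hM hMhat hMrange hMhat0 hTsy hInt2 hIntV
  set f : Ω → ℝ := fun ω => M ω * (if M ω ≤ 2 * Mhat ω then (1 : ℝ) else 0) with hfdef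
  have hfmeas : Measurable f :=
    hM.mul (Measurable.ite (measurableSet_le hM (hMhat.const_mul 2))
      measurable_const measurable_const)
  have hf01 : ∀ ω, 0 ≤ f ω ∧ f ω ≤ 1 := by
    intro ω
    have h1 := (hMrange ω).1
    have h2 := (hMrange ω).2
    simp only [hfdef]
    split <;> constructor <;> nlinarith
  have hfint : Integrable f μ := by
    refine (integrable_const (1 : ℝ)).mono' hfmeas.aestronglyMeasurable ?_
    filter_upwards with ω
    rw [Real.norm_eq_abs, abs_of_nonneg (hf01 ω).1]
    exact (hf01 ω).2
  have hV0 : 0 ≤ V := le_trans (integral_nonneg fun ω => sq_nonneg _) hIntV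
  -- key bound
  have key : ∀ t : ℝ, 0 < t → t < 1 →
      ∫ ω, f ω ∂μ ≤ 2 * Cβ * t ^ (β + 1) + 6 * V / t := by
    intro t ht0 ht1
    have hsmeas : MeasurableSet {ω | M ω ≤ t} := measurableSet_le hM measurable_const
    set g : Ω → ℝ :=
      fun ω => ({ω | M ω ≤ t}).indicator (fun _ => t) ω + (4 / t) * Mhat ω ^ 2 with hgdef
    have hgint : Integrable g μ :=
      ((integrable_const t).indicator hsmeas).add (hInt2.const_mul _)
    have hfg : ∀ ω, f ω ≤ g ω := by
      intro ω
      have h1 := (hMrange ω).1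
      have hh := hMhat0 ω
      have hpos : (0:ℝ) ≤ 4 / t * Mhat ω ^ 2 := by positivity
      simp only [hfdef, hgdef, Set.indicator]
      by_cases hMt : M ω ≤ t <;>
        simp only [Set.mem_setOf_eq, hMt, if_true, if_false] <;> split
      · linarith [mul_one (M ω) ▸ hMt]
      · nlinarith
      · rename_i hle
        push_neg at hMt
        rw [mul_one, zero_add]
        have h2 : t / 2 < Mhat ω := by nlinarith
        calc M ω ≤ 2 * Mhat ω := hle
        _ ≤ 4 / t * Mhat ω ^ 2 := by
            rw [div_mul_eq_mul_div, le_div_iff₀ ht0]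
            nlinarith
      · rw [mul_zero, zero_add]; positivity
    have hle1 : ∫ ω, f ω ∂μ ≤ ∫ ω, g ω ∂μ := integral_mono hfint hgint hfg
    have hge : ∫ ω, g ω ∂μ
        = (μ {ω | M ω ≤ t}).toReal * t + (4 / t) * ∫ ω, Mhat ω ^ 2 ∂μ := by
      rw [hgdef]
      rw [integral_add ((integrable_const t).indicator hsmeas) (hInt2.const_mul _),
        integral_indicator_const _ hsmeas, integral_const_mul, smul_eq_mul, measureReal_def]
    have hmeasle : (μ {ω | M ω ≤ t}).toReal * t ≤ Cβ * t ^ β * t :=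
      mul_le_mul_of_nonneg_right (hTsy t ht0) ht0.le
    have hterm2 : (4 / t) * ∫ ω, Mhat ω ^ 2 ∂μ ≤ (4 / t) * V :=
      mul_le_mul_of_nonneg_left hIntV (by positivity)
    have hrpow : Cβ * t ^ (β + 1) = Cβ * t ^ β * t := by
      rw [Real.rpow_add ht0, Real.rpow_one]; ring
    have hA : 0 ≤ Cβ * t ^ (β + 1) := by positivity
    have hB : 0 ≤ V / t := by positivity
    have h4t : (4 / t) * V = 4 * (V / t) := by ring
    have h6t : 6 * V / t = 6 * (V / t) := by ring
    rw [h6t]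
    nlinarith [hle1, hge, hmeasle, hterm2]
  refine ⟨key, ?_⟩
  have hb2 : (0:ℝ) < β + 2 := by linarith
  have hpexp : (0:ℝ) < (β + 1) / (β + 2) := by positivity
  rcases eq_or_lt_of_le hV0 with hV | hVpos
  · -- V = 0
    subst hV
    rw [Real.zero_rpow (ne_of_gt hpexp), mul_zero]
    by_contra hcon
    push_neg at hcon
    set I := ∫ ω, f ω ∂μ with hIdef
    set s := min (1/2 : ℝ) (I / (4 * Cβ)) with hsdef
    have hs0 : 0 < s := lt_min (by norm_num) (by positivity)
    have hs1 : s < 1 := lt_of_le_of_lt (min_le_left _ _) (by norm_num)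
    have hk := key s hs0 hs1
    simp only [mul_zero, zero_div, add_zero, zero_mul] at hk
    have hb : s ^ (β + 1) ≤ s := by
      calc s ^ (β + 1) ≤ s ^ (1:ℝ) :=
            Real.rpow_le_rpow_of_exponent_ge hs0 hs1.le (by linarith)
      _ = s := Real.rpow_one s
    have hsI : s ≤ I / (4 * Cβ) := min_le_right _ _
    have h4 : 4 * Cβ * s ≤ I := by
      rw [le_div_iff₀ (by positivity)] at hsI; linarith
    have hmul : 2 * Cβ * s ^ (β + 1) ≤ 2 * Cβ * s :=
      mul_le_mul_of_nonneg_left hb (by positivity)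
    linarith
  · by_cases hV1 : V < 1
    · -- 0 < V < 1, choose t = V ^ (1/(β+2))
      set t : ℝ := V ^ ((1:ℝ)/(β+2)) with htdef
      have ht0 : 0 < t := Real.rpow_pos_of_pos hVpos _
      have ht1 : t < 1 := Real.rpow_lt_one hV0 hV1 (by positivity)
      have h1 : t ^ (β + 1) = V ^ ((β+1)/(β+2)) := by
        rw [htdef, ← Real.rpow_mul hV0]
        congr 1
        field_simp
      have hexp : (β+1)/(β+2) = 1 - 1/(β+2) := by
        field_simp
        ring
      have h2 : V ^ ((β+1)/(β+2)) = V / t := by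
        rw [hexp, Real.rpow_sub hVpos, Real.rpow_one, htdef]
      have hVp0 : 0 ≤ V ^ ((β+1)/(β+2)) := Real.rpow_nonneg hV0 _
      calc ∫ ω, f ω ∂μ ≤ 2 * Cβ * t ^ (β + 1) + 6 * V / t := key t ht0 ht1
      _ = 2 * Cβ * V ^ ((β+1)/(β+2)) + 6 * (V / t) := by rw [h1]; ring
      _ = 2 * Cβ * V ^ ((β+1)/(β+2)) + 6 * V ^ ((β+1)/(β+2)) := by rw [h2]
      _ ≤ (2 * Cβ + 7) * V ^ ((β+1)/(β+2)) := by nlinarith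
    · -- V ≥ 1
      push_neg at hV1
      have hpow : (1:ℝ) ≤ V ^ ((β + 1) / (β + 2)) :=
        Real.one_le_rpow hV1 (by positivity)
      have hint1 : ∫ ω, f ω ∂μ ≤ 1 := by
        calc ∫ ω, f ω ∂μ ≤ ∫ _, (1:ℝ) ∂μ :=
              integral_mono hfint (integrable_const 1) fun ω => (hf01 ω).2
        _ = 1 := by simp
      nlinarith [hpow, hint1]
end

section
/- For any probability measure Q on a metric space and any r > 0, the integral of the inverse ball mass over the support is bounded by the r/2-covering number: ∫ 1/Q(B(x,r)) dQ(x) ≤ N(supp(Q), r/2). -/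
open MeasureTheory ENNReal

/-- **Integral of the inverse ball mass is bounded by the covering number.**
For any probability measure `Q` on a metric space and any `r > 0`, the integral
over the support of the inverse `r`-ball mass is bounded by the size of any
`r/2`-cover of the support (and hence by the `r/2`-covering number
`N(supp(Q), r/2)`). -/
theorem integral_inv_ball_mass_le_coveringNumber
    {X : Type*} [MetricSpace X] [MeasurableSpace X]
    (Q : Measure X) [IsProbabilityMeasure Q] (r : ℝ) (hr : 0 < r)
    (supp : Set X)
    (hsupp : supp = {x | ∀ ε : ℝ, 0 < ε → Q (Metric.ball x ε) ≠ 0})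
    (s : Finset X) (hs : ↑s ⊆ supp)
    (hcover : supp ⊆ ⋃ z ∈ s, Metric.ball z (r / 2)) :
    ∫ x in supp, ((Q (Metric.ball x r)).toReal)⁻¹ ∂Q ≤ (s.card : ℝ) := by
  classical
  set f : X → ℝ := fun x => ((Q (Metric.ball x r)).toReal)⁻¹ with hfdef
  set ν : Measure X := Q.restrict supp with hνdef
  by_cases hInt : Integrable f ν
  swap
  · rw [integral_undef hInt]
    exact Nat.cast_nonneg _
  obtain ⟨f₀, hf₀m, hae⟩ := hInt.aestronglyMeasurable
  -- the measurable null set covering {f ≠ f₀}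
  set D : Set X := {x | f x ≠ f₀ x} with hDdef
  have hDnull : ν D = 0 := by
    have := hae
    rw [Filter.EventuallyEq, ae_iff] at this
    exact this
  set N : Set X := toMeasurable ν D with hNdef
  have hNm : MeasurableSet N := measurableSet_toMeasurable ν D
  have hDN : D ⊆ N := subset_toMeasurable ν D
  have hNnull : ν N = 0 := by rw [hNdef, measure_toMeasurable]; exact hDnull
  have hQN : Q (N ∩ supp) = 0 := by
    rw [← Measure.restrict_apply hNm]
    exact hNnull
  -- pointwise bound on the support pieces
  have hpoint : ∀ z, z ∈ (s : Set X) → ∀ x ∈ supp ∩ Metric.ball z (r / 2),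
      ENNReal.ofReal (f x) ≤ (Q (Metric.ball z (r / 2)))⁻¹ := by
    intro z hz x hx
    obtain ⟨hxs, hxb⟩ := hx
    have hx0 : Q (Metric.ball x r) ≠ 0 := by
      rw [hsupp] at hxs
      exact hxs r hr
    have hxtop : Q (Metric.ball x r) ≠ ⊤ := measure_ne_top Q _
    have hsub : Metric.ball z (r / 2) ⊆ Metric.ball x r := by
      intro y hy
      rw [Metric.mem_ball] at hy hxb ⊢
      calc dist y x ≤ dist y z + dist z x := dist_triangle y z x
        _ < r / 2 + r / 2 := by
            have : dist z x = dist x z := dist_comm z x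
            rw [this]; exact add_lt_add hy hxb
        _ = r := by ring
    have htReal : 0 < (Q (Metric.ball x r)).toReal :=
      ENNReal.toReal_pos hx0 hxtop
    have h1 : ENNReal.ofReal (f x) = (Q (Metric.ball x r))⁻¹ := by
      rw [hfdef]
      simp only
      rw [ENNReal.ofReal_inv_of_pos htReal, ENNReal.ofReal_toReal hxtop]
    rw [h1]
    exact ENNReal.inv_le_inv.mpr (measure_mono hsub)
  -- per-ball bound for f₀
  have hz1 : ∀ z, z ∈ (s : Set X) →
      ∫⁻ x, ENNReal.ofReal (f₀ x) ∂(Q.restrict (supp ∩ Metric.ball z (r / 2))) ≤ 1 := by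
    intro z hz
    set B : Set X := Metric.ball z (r / 2) with hBdef
    set S : Set X := supp ∩ B with hSdef
    set c : ℝ≥0∞ := (Q B)⁻¹ with hcdef
    have hQB0 : Q B ≠ 0 := by
      have hzsupp : z ∈ supp := hs hz
      rw [hsupp] at hzsupp
      exact hzsupp (r / 2) (half_pos hr)
    have hQBtop : Q B ≠ ⊤ := measure_ne_top Q B
    -- the bad set is null
    have hmeas : Measurable fun x => ENNReal.ofReal (f₀ x) :=
      ENNReal.measurable_ofReal.comp hf₀m.measurable
    set A : Set X := {x | c < ENNReal.ofReal (f₀ x)} with hAdef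
    have hAm : MeasurableSet A := measurableSet_lt measurable_const hmeas
    have hAsub : A ∩ S ⊆ N ∩ supp := by
      rintro x ⟨hxA, hxS⟩
      refine ⟨hDN ?_, hxS.1⟩
      intro hfeq
      have hle : ENNReal.ofReal (f x) ≤ c := hpoint z hz x hxS
      rw [hfeq] at hle
      exact absurd hle (not_le.mpr hxA)
    have hAnull : Q.restrict S A = 0 := by
      rw [Measure.restrict_apply hAm]
      exact le_antisymm (hQN ▸ measure_mono hAsub) zero_le
    have haebound : ∀ᵐ x ∂(Q.restrict S), ENNReal.ofReal (f₀ x) ≤ c := by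
      rw [ae_iff]
      have : {x | ¬ ENNReal.ofReal (f₀ x) ≤ c} = A := by
        ext x; simp [hAdef, not_le]
      rw [this]
      exact hAnull
    calc ∫⁻ x, ENNReal.ofReal (f₀ x) ∂(Q.restrict S)
        ≤ ∫⁻ _, c ∂(Q.restrict S) := lintegral_mono_ae haebound
      _ = c * (Q.restrict S) Set.univ := by rw [lintegral_const]
      _ = c * Q S := by rw [Measure.restrict_apply_univ]
      _ ≤ c * Q B := mul_le_mul_right (measure_mono Set.inter_subset_right) c
      _ = 1 := ENNReal.inv_mul_cancel hQB0 hQBtop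
  -- the measure ν is dominated by the sum of the restrictions
  have hνle : ν ≤ Measure.sum (fun z : s => Q.restrict (supp ∩ Metric.ball (z : X) (r / 2))) := by
    rw [Measure.le_iff]
    intro t ht
    rw [Measure.sum_apply _ ht]
    have h1 : ν t = Q (t ∩ supp) := Measure.restrict_apply ht
    have hsubset : t ∩ supp ⊆ ⋃ z : s, t ∩ (supp ∩ Metric.ball (z : X) (r / 2)) := by
      rintro x ⟨hxt, hxsupp⟩
      obtain ⟨z, hzmem, hxz⟩ := Set.mem_iUnion₂.mp (hcover hxsupp)
      exact Set.mem_iUnion.mpr ⟨⟨z, hzmem⟩, hxt, hxsupp, hxz⟩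
    calc ν t = Q (t ∩ supp) := h1
      _ ≤ Q (⋃ z : s, t ∩ (supp ∩ Metric.ball (z : X) (r / 2))) := measure_mono hsubset
      _ ≤ ∑' z : s, Q (t ∩ (supp ∩ Metric.ball (z : X) (r / 2))) := measure_iUnion_le _
      _ = ∑' z : s, (Q.restrict (supp ∩ Metric.ball (z : X) (r / 2))) t := by
          congr 1
          ext z
          rw [Measure.restrict_apply ht]
  -- combine
  have key : ∫⁻ x, ENNReal.ofReal (f₀ x) ∂ν ≤ (s.card : ℝ≥0∞) := by
    calc ∫⁻ x, ENNReal.ofReal (f₀ x) ∂ν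
        ≤ ∫⁻ x, ENNReal.ofReal (f₀ x)
            ∂(Measure.sum (fun z : s => Q.restrict (supp ∩ Metric.ball (z : X) (r / 2)))) :=
          lintegral_mono' hνle le_rfl
      _ = ∑' z : s, ∫⁻ x, ENNReal.ofReal (f₀ x)
            ∂(Q.restrict (supp ∩ Metric.ball (z : X) (r / 2))) := lintegral_sum_measure _ _
      _ ≤ ∑' _ : s, (1 : ℝ≥0∞) := ENNReal.tsum_le_tsum (fun z => hz1 z z.2)
      _ = (s.card : ℝ≥0∞) := by
          simp [tsum_fintype]
  -- transfer to f and to the Bochner integral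
  have hlf : ∫⁻ x, ENNReal.ofReal (f x) ∂ν = ∫⁻ x, ENNReal.ofReal (f₀ x) ∂ν :=
    lintegral_congr_ae (hae.fun_comp ENNReal.ofReal)
  have hnn : 0 ≤ᵐ[ν] f := Filter.Eventually.of_forall (fun x => by positivity)
  have heq : ENNReal.ofReal (∫ x, f x ∂ν) = ∫⁻ x, ENNReal.ofReal (f x) ∂ν :=
    ofReal_integral_eq_lintegral_ofReal hInt hnn
  have hfinal : ENNReal.ofReal (∫ x, f x ∂ν) ≤ (s.card : ℝ≥0∞) := by
    rw [heq, hlf]; exact key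
  have hint_nonneg : 0 ≤ ∫ x, f x ∂ν := integral_nonneg (fun x => by positivity)
  have := (ENNReal.ofReal_le_iff_le_toReal (by simp : (s.card : ℝ≥0∞) ≠ ⊤)).mp hfinal
  simpa using this
end

section
/- Let Q_X be the uniform measure on [0,1]^d and let P_X have density p(x) ∝ ‖x‖^ν for some ν > 0, ν ≠ d. Then max(ν, d) is an aggregate transfer exponent from P_X to Q_X: there is a constant C such that ∫_{[0,1]^d} P_X(B(x,r))⁻¹ dQ_X(x) ≤ C·r^{-max(ν,d)} for all 0 < r < 1. -/
open MeasureTheory Set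
open scoped ENNReal NNReal


section
variable {d : ℕ}

lemma myAbs_coord_le_norm (x : EuclideanSpace ℝ (Fin d)) (i : Fin d) : |x i| ≤ ‖x‖ := by
  rw [EuclideanSpace.norm_eq]
  rw [← Real.sqrt_sq_eq_abs]
  apply Real.sqrt_le_sqrt
  have : |x i| ^ 2 ≤ ∑ j, |x j| ^ 2 :=
    Finset.single_le_sum (f := fun j => |x j| ^ 2) (fun j _ => by positivity) (Finset.mem_univ i)
  simpa using this

lemma myNorm_le_sqrt (x : EuclideanSpace ℝ (Fin d)) (hx : ∀ i, x i ∈ Set.Icc (0:ℝ) 1) :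
    ‖x‖ ≤ Real.sqrt d := by
  rw [EuclideanSpace.norm_eq]
  apply Real.sqrt_le_sqrt
  calc ∑ i, ‖x i‖ ^ 2 ≤ ∑ _i : Fin d, (1:ℝ) := by
        apply Finset.sum_le_sum
        intro i _
        have h := hx i
        rw [Real.norm_eq_abs, abs_of_nonneg h.1]
        nlinarith [h.1, h.2]
    _ = d := by simp

lemma myVol_box (a b : Fin d → ℝ) :
    volume {y : EuclideanSpace ℝ (Fin d) | ∀ i, y i ∈ Set.Icc (a i) (b i)}
      = ∏ i, ENNReal.ofReal (b i - a i) := by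
  have hmp := EuclideanSpace.volume_preserving_symm_measurableEquiv_toLp (Fin d)
  have hset : {y : EuclideanSpace ℝ (Fin d) | ∀ i, y i ∈ Set.Icc (a i) (b i)}
      = (MeasurableEquiv.toLp 2 (Fin d → ℝ)).symm ⁻¹' (Set.Icc a b) := by
    ext y
    simp [Set.Icc, Pi.le_def, Set.mem_Icc, forall_and]
  rw [hset, hmp.measure_preimage_equiv, Real.volume_Icc_pi]

end

lemma myAnnulus_est (d : ℕ) (ν : ℝ) (hν : 0 < ν) (r lo hi : ℝ) (hlo : 0 < lo) (hhi : lo ≤ hi) :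
    ∫⁻ x in {x : EuclideanSpace ℝ (Fin d) | lo ≤ ‖x‖ ∧ ‖x‖ ≤ hi},
        ENNReal.ofReal ((max r ‖x‖) ^ (-ν))
      ≤ ENNReal.ofReal (lo ^ (-ν) * hi ^ (d:ℝ))
          * volume (Metric.ball (0:EuclideanSpace ℝ (Fin d)) 1) := by
  set A := {x : EuclideanSpace ℝ (Fin d) | lo ≤ ‖x‖ ∧ ‖x‖ ≤ hi} with hA
  have hmeas : MeasurableSet A := by
    apply MeasurableSet.inter
    · exact measurableSet_le measurable_const measurable_norm
    · exact measurableSet_le measurable_norm measurable_const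
  have h1 : ∫⁻ x in A, ENNReal.ofReal ((max r ‖x‖) ^ (-ν))
      ≤ ∫⁻ _x in A, ENNReal.ofReal (lo ^ (-ν)) := by
    apply setLIntegral_mono' hmeas
    intro x hx
    apply ENNReal.ofReal_le_ofReal
    exact Real.rpow_le_rpow_of_nonpos hlo (le_trans hx.1 (le_max_right _ _)) (by linarith)
  have h2 : A ⊆ Metric.closedBall (0:EuclideanSpace ℝ (Fin d)) hi := by
    intro x hx
    simpa [Metric.mem_closedBall, dist_zero_right] using hx.2
  calc ∫⁻ x in A, ENNReal.ofReal ((max r ‖x‖) ^ (-ν))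
      ≤ ENNReal.ofReal (lo ^ (-ν)) * volume A := by rw [← setLIntegral_const]; exact h1
    _ ≤ ENNReal.ofReal (lo ^ (-ν))
        * volume (Metric.closedBall (0:EuclideanSpace ℝ (Fin d)) hi) := by
        gcongr
        
    _ = ENNReal.ofReal (lo ^ (-ν)) * (ENNReal.ofReal (hi ^ Module.finrank ℝ (EuclideanSpace ℝ (Fin d)))
        * volume (Metric.ball (0:EuclideanSpace ℝ (Fin d)) 1)) := by
        rw [Measure.addHaar_closedBall _ _ (le_trans hlo.le hhi)]
    _ = ENNReal.ofReal (lo ^ (-ν) * hi ^ (d:ℝ))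
        * volume (Metric.ball (0:EuclideanSpace ℝ (Fin d)) 1) := by
        rw [← mul_assoc, ← ENNReal.ofReal_mul (by positivity)]
        congr 3
        rw [finrank_euclideanSpace_fin, ← Real.rpow_natCast]

lemma myGeom_term (ν δ a b : ℝ) (ha : 0 < a) (hb : 0 < b) (k : ℕ) :
    (a^k * b)^(-ν) * (a^(k+1)*b)^δ = a^δ * b^(δ-ν) * (a^(δ-ν))^k := by
  rw [Real.mul_rpow (by positivity) hb.le, Real.mul_rpow (by positivity) hb.le]
  rw [← Real.rpow_natCast a k, ← Real.rpow_natCast a (k+1),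
      ← Real.rpow_natCast (a ^ (δ - ν)) k,
      ← Real.rpow_mul ha.le, ← Real.rpow_mul ha.le, ← Real.rpow_mul ha.le]
  rw [show a ^ ((k:ℝ) * -ν) * b ^ (-ν) * (a ^ ((↑(k+1):ℝ) * δ) * b ^ δ) =
      (a ^ ((k:ℝ) * -ν) * a ^ ((↑(k+1):ℝ) * δ)) * (b ^ (-ν) * b ^ δ) by ring,
    show a ^ δ * b ^ (δ-ν) * a ^ ((δ - ν) * (k:ℝ)) =
      (a ^ δ * a ^ ((δ-ν) * (k:ℝ))) * b ^ (δ-ν) by ring,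
    ← Real.rpow_add ha, ← Real.rpow_add hb, ← Real.rpow_add ha]
  congr 1
  · congr 1
    push_cast
    ring
  · congr 1
    ring

lemma myGeom_term2 (ν δ a b : ℝ) (ha : 0 < a) (hb : 0 < b) (k : ℕ) :
    (a^(k+1) * b)^(-ν) * (a^k*b)^δ = a^(-ν) * b^(δ-ν) * (a^(δ-ν))^k := by
  rw [Real.mul_rpow (by positivity) hb.le, Real.mul_rpow (by positivity) hb.le]
  rw [← Real.rpow_natCast a k, ← Real.rpow_natCast a (k+1),
      ← Real.rpow_natCast (a ^ (δ - ν)) k,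
      ← Real.rpow_mul ha.le, ← Real.rpow_mul ha.le, ← Real.rpow_mul ha.le]
  rw [show a ^ ((↑(k+1):ℝ) * -ν) * b ^ (-ν) * (a ^ ((k:ℝ) * δ) * b ^ δ) =
      (a ^ ((↑(k+1):ℝ) * -ν) * a ^ ((k:ℝ) * δ)) * (b ^ (-ν) * b ^ δ) by ring,
    show a ^ (-ν) * b ^ (δ-ν) * a ^ ((δ - ν) * (k:ℝ)) =
      (a ^ (-ν) * a ^ ((δ-ν) * (k:ℝ))) * b ^ (δ-ν) by ring,
    ← Real.rpow_add ha, ← Real.rpow_add hb, ← Real.rpow_add ha]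
  congr 1
  · congr 1
    push_cast
    ring
  · congr 1
    ring

lemma myNontrivial {d : ℕ} (hd : 0 < d) : Nontrivial (EuclideanSpace ℝ (Fin d)) := by
  refine ⟨⟨EuclideanSpace.single ⟨0, hd⟩ (1:ℝ), 0, fun h => ?_⟩⟩
  have := congrArg (fun v : EuclideanSpace ℝ (Fin d) => v ⟨0, hd⟩) h
  simp [EuclideanSpace.single_apply] at this

lemma myJ_lt (d : ℕ) (hd : 0 < d) (ν : ℝ) (hν : 0 < ν) (hdν : ν < (d:ℝ)) :
    ∃ CJ > (0:ℝ), ∀ r : ℝ, 0 < r → r < 1 →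
      ∫⁻ x in {y : EuclideanSpace ℝ (Fin d) | ∀ i, y i ∈ Set.Icc (0:ℝ) 1},
        ENNReal.ofReal ((max r ‖x‖) ^ (-ν)) ≤ ENNReal.ofReal CJ := by
  classical
  set E := EuclideanSpace ℝ (Fin d)
  haveI : Nontrivial E := myNontrivial hd
  set B : ℝ≥0∞ := volume (Metric.ball (0:E) 1) with hBdef
  have hBfin : B ≠ ⊤ := measure_ball_lt_top.ne
  have hsd : (0:ℝ) < Real.sqrt d := Real.sqrt_pos.mpr (by exact_mod_cast hd)
  set q : ℝ := (2⁻¹:ℝ) ^ ((d:ℝ) - ν) with hqdef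
  have hq0 : 0 < q := Real.rpow_pos_of_pos (by norm_num) _
  have hq1 : q < 1 := Real.rpow_lt_one (by norm_num) (by norm_num) (by linarith)
  have h1q : 0 < 1 - q := by linarith
  set c0 : ℝ := (2⁻¹:ℝ) ^ (-ν) * (Real.sqrt d) ^ ((d:ℝ) - ν) with hc0def
  have hc0 : 0 < c0 := by positivity
  refine ⟨c0 * (1 - q)⁻¹ * (B.toReal + 1), by positivity, ?_⟩
  intro r hr0 hr1
  set A : ℕ → Set E := fun k =>
    {x : E | (2⁻¹:ℝ)^(k+1) * Real.sqrt d ≤ ‖x‖ ∧ ‖x‖ ≤ (2⁻¹:ℝ)^k * Real.sqrt d} with hAdef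
  have cover : {y : E | ∀ i, y i ∈ Set.Icc (0:ℝ) 1} ⊆ {(0:E)} ∪ ⋃ k, A k := by
    intro x hx
    by_cases hx0 : x = 0
    · left; exact hx0
    · right
      have hxpos : 0 < ‖x‖ := norm_pos_iff.mpr hx0
      have hxle : ‖x‖ ≤ Real.sqrt d := myNorm_le_sqrt x hx
      have hex : ∃ m : ℕ, (2⁻¹:ℝ)^m * Real.sqrt d < ‖x‖ := by
        obtain ⟨m, hm⟩ := exists_pow_lt_of_lt_one (div_pos hxpos hsd) (by norm_num : (2⁻¹:ℝ) < 1)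
        exact ⟨m, by have := (lt_div_iff₀ hsd).mp hm; linarith⟩
      set n := Nat.find hex with hn
      have hspec : (2⁻¹:ℝ)^n * Real.sqrt d < ‖x‖ := Nat.find_spec hex
      have hn0 : n ≠ 0 := by
        intro h
        rw [h] at hspec
        simp at hspec
        linarith
      obtain ⟨k, hk⟩ : ∃ k, n = k + 1 :=
        ⟨n - 1, (Nat.succ_pred_eq_of_pos (Nat.pos_of_ne_zero hn0)).symm⟩
      have hmin : ¬ ((2⁻¹:ℝ)^k * Real.sqrt d < ‖x‖) := Nat.find_min hex (by omega)
      exact Set.mem_iUnion.mpr ⟨k, ⟨by rw [← hk]; exact hspec.le, not_lt.mp hmin⟩⟩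
  have hmono := lintegral_mono_set (μ := volume)
      (f := fun x : E => ENNReal.ofReal ((max r ‖x‖) ^ (-ν))) cover
  have hzero : ∫⁻ x in {(0:E)}, ENNReal.ofReal ((max r ‖x‖) ^ (-ν)) = 0 :=
    setLIntegral_measure_zero _ _ (measure_singleton 0)
  have hann : ∀ k : ℕ, ∫⁻ x in A k, ENNReal.ofReal ((max r ‖x‖) ^ (-ν))
      ≤ ENNReal.ofReal c0 * ENNReal.ofReal (q ^ k) * B := by
    intro k
    have h1 := myAnnulus_est d ν hν r ((2⁻¹:ℝ)^(k+1) * Real.sqrt d) ((2⁻¹:ℝ)^k * Real.sqrt d)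
      (by positivity)
      (by
        have h2 : ((2⁻¹:ℝ))^(k+1) ≤ (2⁻¹)^k :=
          pow_le_pow_of_le_one (by norm_num) (by norm_num) (Nat.le_succ k)
        nlinarith)
    refine h1.trans ?_
    rw [myGeom_term2 ν ((d:ℝ)) 2⁻¹ (Real.sqrt d) (by norm_num) hsd k]
    rw [ENNReal.ofReal_mul (by positivity), ENNReal.ofReal_mul (by positivity)]
  have hsum : ∑' k : ℕ, ENNReal.ofReal (q ^ k) = ENNReal.ofReal ((1 - q)⁻¹) := by
    have h1 : ∀ k : ℕ, ENNReal.ofReal (q ^ k) = (ENNReal.ofReal q) ^ k := fun k =>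
      ENNReal.ofReal_pow hq0.le k
    simp_rw [h1]
    rw [ENNReal.tsum_geometric, ENNReal.ofReal_inv_of_pos h1q, ENNReal.ofReal_sub 1 hq0.le,
      ENNReal.ofReal_one]
  calc ∫⁻ x in {y : E | ∀ i, y i ∈ Set.Icc (0:ℝ) 1}, ENNReal.ofReal ((max r ‖x‖) ^ (-ν))
      ≤ ∫⁻ x in {(0:E)} ∪ ⋃ k, A k, ENNReal.ofReal ((max r ‖x‖) ^ (-ν)) := hmono
    _ ≤ (∫⁻ x in {(0:E)}, ENNReal.ofReal ((max r ‖x‖) ^ (-ν)))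
        + ∫⁻ x in ⋃ k, A k, ENNReal.ofReal ((max r ‖x‖) ^ (-ν)) := lintegral_union_le _ _ _
    _ ≤ 0 + ∑' k : ℕ, ∫⁻ x in A k, ENNReal.ofReal ((max r ‖x‖) ^ (-ν)) := by
        rw [hzero]; exact add_le_add le_rfl (lintegral_iUnion_le _ _)
    _ ≤ 0 + ∑' k : ℕ, ENNReal.ofReal c0 * ENNReal.ofReal (q ^ k) * B := by
        gcongr with k
        exact hann k
    _ = ENNReal.ofReal c0 * ENNReal.ofReal ((1 - q)⁻¹) * B := by
        rw [zero_add, ENNReal.tsum_mul_right, ENNReal.tsum_mul_left, hsum]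
    _ ≤ ENNReal.ofReal (c0 * (1 - q)⁻¹ * (B.toReal + 1)) := by
        have hBt : (0:ℝ) ≤ B.toReal := ENNReal.toReal_nonneg
        calc ENNReal.ofReal c0 * ENNReal.ofReal ((1 - q)⁻¹) * B
            = ENNReal.ofReal c0 * ENNReal.ofReal ((1 - q)⁻¹) * ENNReal.ofReal B.toReal := by
              rw [ENNReal.ofReal_toReal hBfin]
          _ ≤ ENNReal.ofReal (c0 * (1 - q)⁻¹ * (B.toReal + 1)) := by
              rw [← ENNReal.ofReal_mul (by positivity), ← ENNReal.ofReal_mul (by positivity)]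
              apply ENNReal.ofReal_le_ofReal
              nlinarith [mul_nonneg hc0.le (inv_nonneg.mpr h1q.le)]

lemma myJ_gt (d : ℕ) (hd : 0 < d) (ν : ℝ) (hν : 0 < ν) (hdν : (d:ℝ) < ν) :
    ∃ CJ > (0:ℝ), ∀ r : ℝ, 0 < r → r < 1 →
      ∫⁻ x in {y : EuclideanSpace ℝ (Fin d) | ∀ i, y i ∈ Set.Icc (0:ℝ) 1},
        ENNReal.ofReal ((max r ‖x‖) ^ (-ν)) ≤ ENNReal.ofReal (CJ * r ^ ((d:ℝ) - ν)) := by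
  classical
  set E := EuclideanSpace ℝ (Fin d)
  set B : ℝ≥0∞ := volume (Metric.ball (0:E) 1) with hBdef
  have hBfin : B ≠ ⊤ := measure_ball_lt_top.ne
  set q : ℝ := 2 ^ ((d:ℝ) - ν) with hqdef
  have hq0 : 0 < q := Real.rpow_pos_of_pos two_pos _
  have hq1 : q < 1 := Real.rpow_lt_one_of_one_lt_of_neg one_lt_two (by linarith)
  have h1q : 0 < 1 - q := by linarith
  refine ⟨(B.toReal + 1) * (1 + 2 ^ ((d:ℝ)) * (1 - q)⁻¹), by positivity, ?_⟩
  intro r hr0 hr1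
  set A : ℕ → Set E := fun k => {x : E | 2^k * r ≤ ‖x‖ ∧ ‖x‖ ≤ 2^(k+1) * r} with hAdef
  -- cover
  have cover : {y : E | ∀ i, y i ∈ Set.Icc (0:ℝ) 1} ⊆ Metric.ball (0:E) r ∪ ⋃ k, A k := by
    intro x _
    by_cases hxr : ‖x‖ < r
    · left; simpa [Metric.mem_ball, dist_zero_right] using hxr
    · right
      push_neg at hxr
      have hex : ∃ m : ℕ, ‖x‖ < 2^m * r := by
        obtain ⟨m, hm⟩ := pow_unbounded_of_one_lt (‖x‖ / r) (one_lt_two (α := ℝ))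
        exact ⟨m, (div_lt_iff₀ hr0).mp hm⟩
      set n := Nat.find hex with hn
      have hspec : ‖x‖ < 2^n * r := Nat.find_spec hex
      have hn0 : n ≠ 0 := by
        intro h
        rw [h] at hspec
        simp at hspec
        linarith
      obtain ⟨k, hk⟩ : ∃ k, n = k + 1 := ⟨n - 1, (Nat.succ_pred_eq_of_pos (Nat.pos_of_ne_zero hn0)).symm⟩
      have hmin : ¬ (‖x‖ < 2^k * r) := Nat.find_min hex (by omega)
      exact Set.mem_iUnion.mpr ⟨k, ⟨not_lt.mp hmin, by rw [← hk]; exact hspec.le⟩⟩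
  have hmono := lintegral_mono_set (μ := volume)
      (f := fun x : E => ENNReal.ofReal ((max r ‖x‖) ^ (-ν))) cover
  -- ball term
  have hball : ∫⁻ x in Metric.ball (0:E) r, ENNReal.ofReal ((max r ‖x‖) ^ (-ν))
      ≤ ENNReal.ofReal (r ^ ((d:ℝ) - ν)) * B := by
    calc ∫⁻ x in Metric.ball (0:E) r, ENNReal.ofReal ((max r ‖x‖) ^ (-ν))
        ≤ ∫⁻ _x in Metric.ball (0:E) r, ENNReal.ofReal (r ^ (-ν)) := by
          apply setLIntegral_mono' measurableSet_ball
          intro x _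
          exact ENNReal.ofReal_le_ofReal
            (Real.rpow_le_rpow_of_nonpos hr0 (le_max_left _ _) (by linarith))
      _ = ENNReal.ofReal (r ^ (-ν)) * volume (Metric.ball (0:E) r) := setLIntegral_const _ _
      _ ≤ ENNReal.ofReal (r ^ (-ν)) * volume (Metric.closedBall (0:E) r) := by
          gcongr; exact Metric.ball_subset_closedBall
      _ = ENNReal.ofReal (r ^ (-ν)) * (ENNReal.ofReal (r ^ Module.finrank ℝ E) * B) := by
          rw [Measure.addHaar_closedBall _ _ hr0.le]
      _ = ENNReal.ofReal (r ^ ((d:ℝ) - ν)) * B := by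
          rw [← mul_assoc, ← ENNReal.ofReal_mul (by positivity)]
          congr 2
          rw [finrank_euclideanSpace_fin, ← Real.rpow_natCast r d, ← Real.rpow_add hr0]
          ring_nf
  -- annuli terms
  have hann : ∀ k : ℕ, ∫⁻ x in A k, ENNReal.ofReal ((max r ‖x‖) ^ (-ν))
      ≤ ENNReal.ofReal (2 ^ ((d:ℝ)) * r ^ ((d:ℝ) - ν)) * ENNReal.ofReal (q ^ k) * B := by
    intro k
    have h1 := myAnnulus_est d ν hν r (2^k * r) (2^(k+1) * r) (by positivity)
      (by
        have h2 : (2:ℝ)^k ≤ 2^(k+1) := by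
          apply pow_le_pow_right₀ one_le_two (Nat.le_succ k)
        nlinarith)
    refine h1.trans ?_
    rw [myGeom_term ν ((d:ℝ)) 2 r two_pos hr0 k]
    rw [ENNReal.ofReal_mul (by positivity), mul_comm ((2:ℝ) ^ ((d:ℝ))) _,
      ENNReal.ofReal_mul (by positivity)]
  -- sum the geometric series
  have hsum : ∑' k : ℕ, ENNReal.ofReal (q ^ k) = ENNReal.ofReal ((1 - q)⁻¹) := by
    have h1 : ∀ k : ℕ, ENNReal.ofReal (q ^ k) = (ENNReal.ofReal q) ^ k := fun k =>
      ENNReal.ofReal_pow hq0.le k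
    simp_rw [h1]
    rw [ENNReal.tsum_geometric, ENNReal.ofReal_inv_of_pos h1q, ENNReal.ofReal_sub 1 hq0.le,
      ENNReal.ofReal_one]
  have htsum : ∑' k : ℕ, ENNReal.ofReal (2 ^ ((d:ℝ)) * r ^ ((d:ℝ) - ν)) * ENNReal.ofReal (q ^ k) * B
      = ENNReal.ofReal (2 ^ ((d:ℝ)) * r ^ ((d:ℝ) - ν)) * ENNReal.ofReal ((1 - q)⁻¹) * B := by
    rw [← hsum]
    rw [ENNReal.tsum_mul_right, ENNReal.tsum_mul_left]
  have hBeq : B = ENNReal.ofReal B.toReal := (ENNReal.ofReal_toReal hBfin).symm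
  calc ∫⁻ x in {y : E | ∀ i, y i ∈ Set.Icc (0:ℝ) 1}, ENNReal.ofReal ((max r ‖x‖) ^ (-ν))
      ≤ ∫⁻ x in Metric.ball (0:E) r ∪ ⋃ k, A k, ENNReal.ofReal ((max r ‖x‖) ^ (-ν)) := hmono
    _ ≤ (∫⁻ x in Metric.ball (0:E) r, ENNReal.ofReal ((max r ‖x‖) ^ (-ν)))
        + ∫⁻ x in ⋃ k, A k, ENNReal.ofReal ((max r ‖x‖) ^ (-ν)) := lintegral_union_le _ _ _
    _ ≤ ENNReal.ofReal (r ^ ((d:ℝ) - ν)) * B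
        + ∑' k : ℕ, ∫⁻ x in A k, ENNReal.ofReal ((max r ‖x‖) ^ (-ν)) := by
        exact add_le_add hball (lintegral_iUnion_le _ _)
    _ ≤ ENNReal.ofReal (r ^ ((d:ℝ) - ν)) * B
        + ∑' k : ℕ, ENNReal.ofReal (2 ^ ((d:ℝ)) * r ^ ((d:ℝ) - ν)) * ENNReal.ofReal (q ^ k) * B := by
        gcongr with k
        exact hann k
    _ = ENNReal.ofReal (r ^ ((d:ℝ) - ν)) * B
        + ENNReal.ofReal (2 ^ ((d:ℝ)) * r ^ ((d:ℝ) - ν)) * ENNReal.ofReal ((1 - q)⁻¹) * B := by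
        rw [htsum]
    _ ≤ ENNReal.ofReal ((B.toReal + 1) * (1 + 2 ^ ((d:ℝ)) * (1 - q)⁻¹) * r ^ ((d:ℝ) - ν)) := by
        have hBt : (0:ℝ) ≤ B.toReal := ENNReal.toReal_nonneg
        rw [hBeq]
        rw [ENNReal.toReal_ofReal hBt, ← ENNReal.ofReal_mul (by positivity), ← ENNReal.ofReal_mul (by positivity),
          ← ENNReal.ofReal_mul (by positivity), ← ENNReal.ofReal_add (by positivity) (by positivity)]
        apply ENNReal.ofReal_le_ofReal
        have hrp : (0:ℝ) < r ^ ((d:ℝ) - ν) := Real.rpow_pos_of_pos hr0 _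
        have hc : (0:ℝ) ≤ 2 ^ ((d:ℝ)) * (1 - q)⁻¹ := by positivity
        nlinarith [mul_nonneg (mul_nonneg hc hBt) hrp.le, mul_nonneg hBt hrp.le,
          mul_nonneg hc hrp.le]

lemma myJ (d : ℕ) (hd : 0 < d) (ν : ℝ) (hν : 0 < ν) (hνd : ν ≠ (d:ℝ)) :
    ∃ CJ > (0:ℝ), ∀ r : ℝ, 0 < r → r < 1 →
      ∫⁻ x in {y : EuclideanSpace ℝ (Fin d) | ∀ i, y i ∈ Set.Icc (0:ℝ) 1},
        ENNReal.ofReal ((max r ‖x‖) ^ (-ν))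
          ≤ ENNReal.ofReal (CJ * r ^ ((d:ℝ) - max ν (d:ℝ))) := by
  rcases hνd.lt_or_gt with h | h
  · obtain ⟨CJ, hCJ0, hCJ⟩ := myJ_lt d hd ν hν h
    refine ⟨CJ, hCJ0, ?_⟩
    intro r hr0 hr1
    have hmax : max ν (d:ℝ) = (d:ℝ) := max_eq_right h.le
    rw [hmax, sub_self, Real.rpow_zero, mul_one]
    exact hCJ r hr0 hr1
  · obtain ⟨CJ, hCJ0, hCJ⟩ := myJ_gt d hd ν hν h
    refine ⟨CJ, hCJ0, ?_⟩
    intro r hr0 hr1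
    have hmax : max ν (d:ℝ) = ν := max_eq_left h.le
    rw [hmax]
    exact hCJ r hr0 hr1

lemma myBall_lb (d : ℕ) (hd : 0 < d) (ν : ℝ) (hν : 0 < ν) (r : ℝ) (hr0 : 0 < r) (hr1 : r < 1)
    (x : EuclideanSpace ℝ (Fin d)) (hx : ∀ i, x i ∈ Set.Icc (0:ℝ) 1) :
    ENNReal.ofReal ((max r ‖x‖ / (8 * Real.sqrt d)) ^ ν * (r / (8 * Real.sqrt d)) ^ d)
      ≤ ∫⁻ y in Metric.ball x r ∩ {y : EuclideanSpace ℝ (Fin d) | ∀ i, y i ∈ Set.Icc (0:ℝ) 1},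
          ENNReal.ofReal (‖y‖ ^ ν) := by
  classical
  set sd := Real.sqrt d with hsddef
  have hsd1 : (1:ℝ) ≤ sd := by
    have h1 : (1:ℝ) ≤ (d:ℝ) := by exact_mod_cast hd
    rw [hsddef, show (1:ℝ) = Real.sqrt 1 by simp]
    exact Real.sqrt_le_sqrt h1
  have hsd0 : (0:ℝ) < sd := lt_of_lt_of_le one_pos hsd1
  set t : ℝ := r / (4 * sd) with htdef
  have ht0 : 0 < t := by positivity
  have ht4 : t ≤ 1/4 := by
    have h1 : t ≤ r / 4 := by
      apply div_le_div_of_nonneg_left hr0.le (by norm_num)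
      linarith
    linarith
  set a : Fin d → ℝ := fun i => if x i ≤ 1/2 then x i + t/2 else x i - t with hadef
  set b : Fin d → ℝ := fun i => if x i ≤ 1/2 then x i + t else x i - t/2 with hbdef
  set K : Set (EuclideanSpace ℝ (Fin d)) := {y : EuclideanSpace ℝ (Fin d) | ∀ i, y i ∈ Set.Icc (a i) (b i)} with hKdef
  -- K inside cube
  have hKS : K ⊆ {y : EuclideanSpace ℝ (Fin d) | ∀ i, y i ∈ Set.Icc (0:ℝ) 1} := by
    intro y hy i
    have hyi := hy i
    have hxi := hx i
    simp only [hadef, hbdef, Set.mem_Icc] at hyi ⊢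
    by_cases hc : x i ≤ 1/2
    · rw [if_pos hc, if_pos hc] at hyi
      exact ⟨by linarith [hxi.1], by linarith⟩
    · rw [if_neg hc, if_neg hc] at hyi
      push_neg at hc
      exact ⟨by linarith, by linarith [hxi.2]⟩
  -- distance bound on K
  have hKdist : ∀ y ∈ K, dist y x ≤ r / 4 := by
    intro y hy
    have hcoord : ∀ i, dist (y i) (x i) ≤ t := by
      intro i
      have hyi := hy i
      simp only [hadef, hbdef, Set.mem_Icc] at hyi
      rw [Real.dist_eq, abs_le]
      by_cases hc : x i ≤ 1/2
      · rw [if_pos hc, if_pos hc] at hyi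
        exact ⟨by linarith, by linarith⟩
      · rw [if_neg hc, if_neg hc] at hyi
        exact ⟨by linarith, by linarith⟩
    have h1 : dist y x ≤ Real.sqrt (d * t^2) := by
      rw [EuclideanSpace.dist_eq]
      apply Real.sqrt_le_sqrt
      calc ∑ i, dist (y i) (x i) ^ 2 ≤ ∑ _i : Fin d, t^2 := by
            apply Finset.sum_le_sum
            intro i _
            have := hcoord i
            nlinarith [dist_nonneg (x := y i) (y := x i)]
        _ = d * t^2 := by rw [Finset.sum_const, Finset.card_univ]; simp [nsmul_eq_mul]
    have h2 : Real.sqrt ((d:ℝ) * t^2) = sd * t := by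
      rw [Real.sqrt_mul (by positivity), Real.sqrt_sq ht0.le]
    have h3 : sd * t = r / 4 := by
      rw [htdef]
      field_simp
    linarith
  have hKball : K ⊆ Metric.ball x r := by
    intro y hy
    have := hKdist y hy
    rw [Metric.mem_ball]
    linarith
  -- norm lower bound on K
  set M : ℝ := max r ‖x‖ / (8 * sd) with hMdef
  have hM0 : 0 ≤ M := by positivity
  have ht2 : t / 2 = r / (8 * sd) := by rw [htdef]; ring
  have hnormlb : ∀ y ∈ K, M ≤ ‖y‖ := by
    intro y hy
    set i0 : Fin d := ⟨0, hd⟩ with hi0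
    have hyi0 := hy i0
    simp only [hadef, hbdef, Set.mem_Icc] at hyi0
    have hynorm : y i0 ≤ ‖y‖ := le_trans (le_abs_self _) (myAbs_coord_le_norm y i0)
    have hxsd : ‖x‖ ≤ sd := myNorm_le_sqrt x hx
    have hmaxsd : max r ‖x‖ ≤ sd := max_le (by linarith) hxsd
    by_cases hc : x i0 ≤ 1/2
    · rw [if_pos hc, if_pos hc] at hyi0
      have hxi0 := hx i0
      have hyt : t/2 ≤ y i0 := by linarith [hxi0.1]
      rcases le_total ‖x‖ r with hmx | hmx
      · rw [hMdef, max_eq_left hmx, ← ht2]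
        linarith
      · rw [hMdef, max_eq_right hmx]
        have hd1 : dist y x ≤ r/4 := hKdist y hy
        have hns : ‖x‖ - ‖y‖ ≤ dist y x := by
          rw [dist_comm, dist_eq_norm]
          exact le_trans (norm_sub_norm_le x y) le_rfl
        have h34 : (3/4) * ‖x‖ ≤ ‖y‖ := by linarith
        have hdiv : ‖x‖ / (8 * sd) ≤ ‖x‖ / 8 := by
          apply div_le_div_of_nonneg_left (norm_nonneg x) (by norm_num)
          linarith
        linarith [norm_nonneg x]
    · rw [if_neg hc, if_neg hc] at hyi0
      push_neg at hc
      have hy14 : (1:ℝ)/4 ≤ y i0 := by linarith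
      have : M ≤ 1/8 := by
        rw [hMdef]
        rw [div_le_iff₀ (by positivity)]
        calc max r ‖x‖ ≤ sd := hmaxsd
          _ ≤ 1/8 * (8 * sd) := by ring_nf; linarith
      linarith
  -- measurability and volume of K
  have hKmeas : MeasurableSet K := by
    rw [hKdef]
    have : {y : EuclideanSpace ℝ (Fin d) | ∀ i, y i ∈ Set.Icc (a i) (b i)}
        = ⋂ i, (fun y : EuclideanSpace ℝ (Fin d) => y i) ⁻¹' (Set.Icc (a i) (b i)) := by
      ext y; simp
    rw [this]
    exact MeasurableSet.iInter fun i => ((measurable_pi_apply i).comp (WithLp.measurable_ofLp 2 _)) measurableSet_Icc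
  have hKvol : volume K = ENNReal.ofReal ((t/2)^d) := by
    rw [hKdef, myVol_box a b]
    have hab : ∀ i, b i - a i = t/2 := by
      intro i
      rw [hadef, hbdef]
      simp only []
      by_cases hc : x i ≤ 1/2
      · rw [if_pos hc, if_pos hc]; ring
      · rw [if_neg hc, if_neg hc]; ring
    simp_rw [hab]
    rw [Finset.prod_const, Finset.card_univ, ← ENNReal.ofReal_pow (by positivity)]
    simp
  -- main chain
  calc ENNReal.ofReal ((max r ‖x‖ / (8 * sd)) ^ ν * (r / (8 * sd)) ^ d)
      = ENNReal.ofReal (M ^ ν) * ENNReal.ofReal ((t/2)^d) := by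
        rw [← ENNReal.ofReal_mul (by positivity), hMdef, ht2]
    _ = ENNReal.ofReal (M ^ ν) * volume K := by rw [hKvol]
    _ = ∫⁻ _y in K, ENNReal.ofReal (M ^ ν) := (setLIntegral_const _ _).symm
    _ ≤ ∫⁻ y in K, ENNReal.ofReal (‖y‖ ^ ν) := by
        apply setLIntegral_mono' hKmeas
        intro y hy
        exact ENNReal.ofReal_le_ofReal (Real.rpow_le_rpow hM0 (hnormlb y hy) hν.le)
    _ ≤ ∫⁻ y in Metric.ball x r ∩ {y : EuclideanSpace ℝ (Fin d) | ∀ i, y i ∈ Set.Icc (0:ℝ) 1},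
          ENNReal.ofReal (‖y‖ ^ ν) := by
        apply lintegral_mono_set
        intro y hy
        exact ⟨hKball hy, hKS hy⟩

/-- **Example: vanishing source density.**  Let `Q_X` be the uniform measure on
`[0,1]^d` and let `P_X` have density proportional to `‖x‖^ν` there, with
`ν > 0`, `ν ≠ d`.  Then `max(ν,d)` is an aggregate transfer exponent from
`P_X` to `Q_X`: there is a constant `C` with
`∫_{[0,1]^d} P_X(B(x,r))⁻¹ dQ_X(x) ≤ C·r^{-max(ν,d)}` for all `0 < r < 1`. -/
theorem aggExp_of_vanishing_density (d : ℕ) (hd : 0 < d) (ν : ℝ) (hν : 0 < ν)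
    (hνd : ν ≠ d)
    (S : Set (EuclideanSpace ℝ (Fin d)))
    (hS : S = {x : EuclideanSpace ℝ (Fin d) | ∀ i, x i ∈ Set.Icc (0 : ℝ) 1})
    (Q : Measure (EuclideanSpace ℝ (Fin d))) (hQ : Q = volume.restrict S)
    (Z : ℝ) (hZ : Z = ∫ x in S, ‖x‖ ^ ν)
    (P : Measure (EuclideanSpace ℝ (Fin d)))
    (hP : P = (volume.restrict S).withDensity
      fun x => ENNReal.ofReal (‖x‖ ^ ν / Z)) :
    ∃ C > (0 : ℝ), ∀ r : ℝ, 0 < r → r < 1 →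
      ∫ x, ((P (Metric.ball x r)).toReal)⁻¹ ∂Q
        ≤ C * r ^ (-(max ν (d : ℝ))) := by
  classical
  have hsd1 : (1:ℝ) ≤ Real.sqrt d := by
    have h1 : (1:ℝ) ≤ (d:ℝ) := by exact_mod_cast hd
    rw [show (1:ℝ) = Real.sqrt 1 by simp]
    exact Real.sqrt_le_sqrt h1
  have hsd0 : (0:ℝ) < Real.sqrt d := lt_of_lt_of_le one_pos hsd1
  set β : ℝ := 8 * Real.sqrt d with hβdef
  have hβ0 : 0 < β := by positivity
  -- basic facts about S
  have hSclosed : IsClosed S := by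
    rw [hS]
    have : {x : EuclideanSpace ℝ (Fin d) | ∀ i, x i ∈ Set.Icc (0:ℝ) 1}
        = ⋂ i, (fun y : EuclideanSpace ℝ (Fin d) => y i) ⁻¹' (Set.Icc (0:ℝ) 1) := by
      ext y; simp
    rw [this]
    exact isClosed_iInter fun i => IsClosed.preimage ((continuous_apply i).comp (PiLp.continuous_ofLp ..)) isClosed_Icc
  have hScomp : IsCompact S := by
    apply Metric.isCompact_of_isClosed_isBounded hSclosed
    apply (Metric.isBounded_closedBall (x := (0 : EuclideanSpace ℝ (Fin d))) (r := Real.sqrt d)).subset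
    intro y hy
    rw [Metric.mem_closedBall, dist_zero_right]
    exact myNorm_le_sqrt y (by rw [hS] at hy; exact hy)
  have hSmeas : MeasurableSet S := hSclosed.measurableSet
  have hSvol : volume S ≠ ⊤ := hScomp.measure_lt_top.ne
  -- positivity of Z
  have hcontpow : Continuous fun x : EuclideanSpace ℝ (Fin d) => ‖x‖ ^ ν :=
    Continuous.rpow_const continuous_norm (fun x => Or.inr hν.le)
  have hintS : IntegrableOn (fun x : EuclideanSpace ℝ (Fin d) => ‖x‖ ^ ν) S :=
    hcontpow.continuousOn.integrableOn_compact hScomp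
  have hZpos : 0 < Z := by
    rw [hZ]
    set K0 : Set (EuclideanSpace ℝ (Fin d)) :=
      {y | ∀ i, y i ∈ Set.Icc ((fun _ : Fin d => (1/2:ℝ)) i) ((fun _ : Fin d => (1:ℝ)) i)}
      with hK0def
    have hK0S : K0 ⊆ S := by
      rw [hS]
      intro y hy i
      have := hy i
      simp only [Set.mem_Icc] at this ⊢
      constructor <;> linarith [this.1, this.2]
    have hK0vol : volume K0 = ENNReal.ofReal ((1/2:ℝ)^d) := by
      rw [hK0def, myVol_box]
      have heach : ∀ i : Fin d, ENNReal.ofReal ((fun _ : Fin d => (1:ℝ)) i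
          - (fun _ : Fin d => (1/2:ℝ)) i) = ENNReal.ofReal (1/2) := fun i => by norm_num
      rw [Finset.prod_congr rfl (fun i _ => heach i), Finset.prod_const, Finset.card_univ,
        ← ENNReal.ofReal_pow (by norm_num)]
      simp
    have hK0meas : MeasurableSet K0 := by
      have : K0 = ⋂ i, (fun y : EuclideanSpace ℝ (Fin d) => y i) ⁻¹' (Set.Icc (1/2:ℝ) 1) := by
        ext y; simp [hK0def]
      rw [this]
      exact MeasurableSet.iInter fun i => ((measurable_pi_apply i).comp (WithLp.measurable_ofLp 2 _)) measurableSet_Icc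
    have hlow : ∀ y ∈ K0, (1/2:ℝ)^ν ≤ ‖y‖ ^ ν := by
      intro y hy
      apply Real.rpow_le_rpow (by norm_num) _ hν.le
      have h1 := (hy ⟨0, hd⟩)
      simp only [Set.mem_Icc] at h1
      calc (1/2:ℝ) ≤ y ⟨0, hd⟩ := h1.1
        _ ≤ |y ⟨0, hd⟩| := le_abs_self _
        _ ≤ ‖y‖ := myAbs_coord_le_norm y _
    have hconst : ∫ _y in K0, (1/2:ℝ)^ν ∂volume = (volume K0).toReal * (1/2:ℝ)^ν := by
      rw [setIntegral_const, smul_eq_mul, measureReal_def]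
    have h2 : ∫ _y in K0, (1/2:ℝ)^ν ∂volume ≤ ∫ y in K0, ‖y‖ ^ ν ∂volume := by
      apply setIntegral_mono_on (integrableOn_const ?_)
        (hintS.mono_set hK0S) hK0meas hlow
      rw [hK0vol]; exact ENNReal.ofReal_ne_top
    have h3 : ∫ y in K0, ‖y‖ ^ ν ∂volume ≤ ∫ y in S, ‖y‖ ^ ν ∂volume := by
      apply setIntegral_mono_set hintS
      · exact Filter.Eventually.of_forall fun y => Real.rpow_nonneg (norm_nonneg y) ν
      · exact HasSubset.Subset.eventuallyLE hK0S
    have h4 : (0:ℝ) < (volume K0).toReal * (1/2:ℝ)^ν := by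
      rw [hK0vol, ENNReal.toReal_ofReal (by positivity)]
      positivity
    linarith
  have hZne : Z ≠ 0 := hZpos.ne'
  -- P is finite
  have hPfin : ∀ s : Set (EuclideanSpace ℝ (Fin d)), P s ≠ ⊤ := by
    intro s
    have h1 : P s ≤ P Set.univ := measure_mono (Set.subset_univ s)
    have h2 : P Set.univ ≤ ENNReal.ofReal ((Real.sqrt d) ^ ν / Z) * volume S := by
      rw [hP, withDensity_apply _ MeasurableSet.univ, Measure.restrict_restrict MeasurableSet.univ,
        Set.univ_inter]
      calc ∫⁻ y in S, ENNReal.ofReal (‖y‖ ^ ν / Z)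
          ≤ ∫⁻ _y in S, ENNReal.ofReal ((Real.sqrt d) ^ ν / Z) := by
            apply setLIntegral_mono' hSmeas
            intro y hy
            have hnorm : ‖y‖ ^ ν ≤ (Real.sqrt d)^ν :=
              Real.rpow_le_rpow (norm_nonneg y)
                (myNorm_le_sqrt y (by rw [hS] at hy; exact hy)) hν.le
            apply ENNReal.ofReal_le_ofReal
            gcongr
        _ = ENNReal.ofReal ((Real.sqrt d) ^ ν / Z) * volume S := setLIntegral_const _ _
    have h3 : ENNReal.ofReal ((Real.sqrt d) ^ ν / Z) * volume S ≠ ⊤ :=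
      ENNReal.mul_ne_top ENNReal.ofReal_ne_top hSvol
    exact ne_top_of_le_ne_top h3 (h1.trans h2)
  obtain ⟨CJ, hCJ0, hCJ⟩ := myJ d hd ν hν hνd
  refine ⟨Z * β ^ ν * β ^ d * CJ, by positivity, ?_⟩
  intro r hr0 hr1
  set LB : EuclideanSpace ℝ (Fin d) → ℝ :=
    fun x => (max r ‖x‖ / β) ^ ν * (r / β) ^ d / Z with hLBdef
  have hLBpos : ∀ x, 0 < LB x := by
    intro x
    have h1 : 0 < max r ‖x‖ := lt_of_lt_of_le hr0 (le_max_left _ _)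
    rw [hLBdef]
    have := Real.rpow_pos_of_pos (div_pos h1 hβ0) ν
    positivity
  have hLB : ∀ x ∈ S, ENNReal.ofReal (LB x) ≤ P (Metric.ball x r) := by
    intro x hx
    have hxmem : ∀ i, x i ∈ Set.Icc (0:ℝ) 1 := by rw [hS] at hx; exact hx
    have hkey := myBall_lb d hd ν hν r hr0 hr1 x hxmem
    rw [hP, withDensity_apply _ Metric.isOpen_ball.measurableSet,
      Measure.restrict_restrict Metric.isOpen_ball.measurableSet]
    have hfact : ∀ y : EuclideanSpace ℝ (Fin d), ENNReal.ofReal (‖y‖^ν / Z)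
        = ENNReal.ofReal (‖y‖^ν) * ENNReal.ofReal (Z⁻¹) := fun y => by
      rw [div_eq_mul_inv, ENNReal.ofReal_mul (Real.rpow_nonneg (norm_nonneg y) ν)]
    simp_rw [hfact]
    rw [lintegral_mul_const' _ _ ENNReal.ofReal_ne_top]
    have heq : ENNReal.ofReal (LB x)
        = ENNReal.ofReal ((max r ‖x‖ / β) ^ ν * (r / β) ^ d) * ENNReal.ofReal (Z⁻¹) := by
      rw [← ENNReal.ofReal_mul (by positivity)]
      congr 1
    rw [heq, hS]
    exact mul_le_mul_left hkey _
  have hptR : ∀ x ∈ S, ((P (Metric.ball x r)).toReal)⁻¹ ≤ (LB x)⁻¹ := by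
    intro x hx
    have h1 : LB x ≤ (P (Metric.ball x r)).toReal :=
      (ENNReal.ofReal_le_iff_le_toReal (hPfin _)).mp (hLB x hx)
    exact inv_anti₀ (hLBpos x) h1
  set g : EuclideanSpace ℝ (Fin d) → ℝ :=
    fun x => (Z * β ^ ν * β ^ d / r ^ d) * (max r ‖x‖) ^ (-ν) with hgdef
  have hLBinv : ∀ x, (LB x)⁻¹ = g x := by
    intro x
    have hM : 0 < max r ‖x‖ := lt_of_lt_of_le hr0 (le_max_left _ _)
    rw [hLBdef, hgdef]
    simp only []
    rw [Real.div_rpow hM.le hβ0.le, div_pow, Real.rpow_neg hM.le]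
    have hMν : (0:ℝ) < (max r ‖x‖) ^ ν := Real.rpow_pos_of_pos hM ν
    have hβν : (0:ℝ) < β ^ ν := Real.rpow_pos_of_pos hβ0 ν
    have hrd : (0:ℝ) < r ^ d := by positivity
    have hβd : (0:ℝ) < β ^ d := by positivity
    field_simp
  have hgcont : Continuous g := by
    apply Continuous.mul continuous_const
    apply Continuous.rpow_const (Continuous.max continuous_const continuous_norm)
    intro x
    left
    exact (lt_of_lt_of_le hr0 (le_max_left _ _)).ne'
  have hgint : Integrable g Q := by
    rw [hQ]
    exact hgcont.continuousOn.integrableOn_compact hScomp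
  have hmain : ∫ x, ((P (Metric.ball x r)).toReal)⁻¹ ∂Q ≤ ∫ x, g x ∂Q := by
    apply integral_mono_of_nonneg
    · exact Filter.Eventually.of_forall fun x => inv_nonneg.mpr ENNReal.toReal_nonneg
    · exact hgint
    · rw [hQ]
      refine (ae_restrict_iff' hSmeas).mpr ?_
      exact Filter.Eventually.of_forall fun x hx => (hptR x hx).trans_eq (hLBinv x)
  have hInt2 : ∫ x, g x ∂Q
      = (Z * β ^ ν * β ^ d / r ^ d) * ∫ x in S, (max r ‖x‖) ^ (-ν) ∂volume := by
    rw [hQ, hgdef]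
    exact integral_const_mul _ _
  have hmeascont : Continuous fun x : EuclideanSpace ℝ (Fin d) => (max r ‖x‖) ^ (-ν) := by
    apply Continuous.rpow_const (Continuous.max continuous_const continuous_norm)
    intro x
    left
    exact (lt_of_lt_of_le hr0 (le_max_left _ _)).ne'
  have hJle : ∫ x in S, (max r ‖x‖) ^ (-ν) ∂volume ≤ CJ * r ^ ((d:ℝ) - max ν (d:ℝ)) := by
    have hpos : 0 ≤ᵐ[volume.restrict S] fun x : EuclideanSpace ℝ (Fin d) => (max r ‖x‖) ^ (-ν) :=
      Filter.Eventually.of_forall fun x =>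
        Real.rpow_nonneg (le_trans hr0.le (le_max_left _ _)) _
    rw [integral_eq_lintegral_of_nonneg_ae hpos hmeascont.aestronglyMeasurable]
    have hb := hCJ r hr0 hr1
    rw [← hS] at hb
    calc (∫⁻ x in S, ENNReal.ofReal ((max r ‖x‖) ^ (-ν)) ∂volume).toReal
        ≤ (ENNReal.ofReal (CJ * r ^ ((d:ℝ) - max ν (d:ℝ)))).toReal :=
          ENNReal.toReal_mono ENNReal.ofReal_ne_top hb
      _ = CJ * r ^ ((d:ℝ) - max ν (d:ℝ)) := ENNReal.toReal_ofReal (by positivity)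
  calc ∫ x, ((P (Metric.ball x r)).toReal)⁻¹ ∂Q ≤ ∫ x, g x ∂Q := hmain
    _ = (Z * β ^ ν * β ^ d / r ^ d) * ∫ x in S, (max r ‖x‖) ^ (-ν) ∂volume := hInt2
    _ ≤ (Z * β ^ ν * β ^ d / r ^ d) * (CJ * r ^ ((d:ℝ) - max ν (d:ℝ))) := by
        apply mul_le_mul_of_nonneg_left hJle
        positivity
    _ = (Z * β ^ ν * β ^ d * CJ) * r ^ (-(max ν (d:ℝ))) := by
        rw [show r ^ (-(max ν (d:ℝ))) = r ^ ((d:ℝ) - max ν (d:ℝ)) / r ^ ((d:ℝ)) by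
          rw [← Real.rpow_sub hr0]; congr 1; ring]
        rw [← Real.rpow_natCast r d]
        ring
end
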